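/- Let f ≥ 1, m ≥ 1, P ≥ 1 be integers and K = f·m ≥ 2, let M, R̃, Ṽ be symmetric positive definite P×P real matrices, let b_1 > 0 and b ≥ 0, and let L = diag(ℓ_1, …, ℓ_P) with ℓ_i ≥ 0. Set N = I_f ⊗ (b_1 I_m + b 1_m 1_mᵀ), V_1 = b_1 Ṽ, V_2 = (mb + b_1) Ṽ, S_1 = R̃ + V_1, S_2 = R̃ + V_2, T = I_K − (1/K)·1_K 1_Kᵀ, and Σ = {T ⊗ (M⁻¹ + R̃)⁻¹ + (N ⊗ Ṽ)⁻¹}⁻¹. Then tr[Σ (I_K ⊗ L)] = f(m−1)·tr{(M + S_1⁻¹)⁻¹ S_1⁻¹ V_1 L V_1 S_1⁻¹} + (f−1)·tr{(M + S_2⁻¹)⁻¹ S_2⁻¹ V_2 L V_2 S_2⁻¹} + f(m−1)·tr[(V_1 − V_1 S_1⁻¹ V_1) L] + (f−1)·tr[(V_2 − V_2 S_2⁻¹ V_2) L] + tr(V_2 L). -/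

import Mathlib

noncomputable section
open Matrix Kronecker

/-- The all-ones square matrix. -/
def onesMat (ι : Type*) : Matrix ι ι ℝ := Matrix.of fun _ _ => 1

lemma ones_mul_ones (n : ℕ) : onesMat (Fin n) * onesMat (Fin n) = (n : ℝ) • onesMat (Fin n) := by
  ext i j; simp [onesMat, Matrix.mul_apply]

lemma trace_ones (n : ℕ) : trace (onesMat (Fin n)) = (n : ℝ) := by
  simp [onesMat, Matrix.trace, Matrix.diag]

lemma onesMat_prod (f m : ℕ) :
    onesMat (Fin f × Fin m) = onesMat (Fin f) ⊗ₖ onesMat (Fin m) := by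
  ext ⟨a,b⟩ ⟨c,d⟩; simp [onesMat, kroneckerMap_apply]

lemma posDef_smul {n : Type*} [Fintype n] {A : Matrix n n ℝ} (hA : A.PosDef) {c : ℝ}
    (hc : 0 < c) : (c • A).PosDef := by
  refine ⟨?_, fun x hx => ?_⟩
  · unfold Matrix.IsHermitian
    rw [conjTranspose_smul, hA.isHermitian.eq]; simp
  · exact (hA.smul hc).2 hx

lemma pd_det {n : Type*} [Fintype n] [DecidableEq n] {A : Matrix n n ℝ} (h : A.PosDef) :
    IsUnit A.det := h.det_pos.ne'.isUnit

section proj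
variable (n : ℕ)

lemma proj_idem (hn : 1 ≤ n) : ((n:ℝ)⁻¹ • onesMat (Fin n)) * ((n:ℝ)⁻¹ • onesMat (Fin n))
    = (n:ℝ)⁻¹ • onesMat (Fin n) := by
  have hn' : (n:ℝ) ≠ 0 := Nat.cast_ne_zero.2 (by omega)
  rw [Matrix.smul_mul, Matrix.mul_smul, ones_mul_ones, smul_smul, smul_smul]
  congr 1
  field_simp

lemma qp_mul (hn : 1 ≤ n) :
    ((1 : Matrix (Fin n) (Fin n) ℝ) - (n:ℝ)⁻¹ • onesMat (Fin n)) * ((n:ℝ)⁻¹ • onesMat (Fin n))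
      = 0 := by
  rw [sub_mul, one_mul, proj_idem n hn, sub_self]

lemma pq_mul (hn : 1 ≤ n) :
    ((n:ℝ)⁻¹ • onesMat (Fin n)) * ((1 : Matrix (Fin n) (Fin n) ℝ) - (n:ℝ)⁻¹ • onesMat (Fin n))
      = 0 := by
  rw [mul_sub, mul_one, proj_idem n hn, sub_self]

lemma qq_mul (hn : 1 ≤ n) :
    ((1 : Matrix (Fin n) (Fin n) ℝ) - (n:ℝ)⁻¹ • onesMat (Fin n))
      * ((1 : Matrix (Fin n) (Fin n) ℝ) - (n:ℝ)⁻¹ • onesMat (Fin n))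
      = (1 : Matrix (Fin n) (Fin n) ℝ) - (n:ℝ)⁻¹ • onesMat (Fin n) := by
  rw [mul_sub, mul_one, qp_mul n hn, sub_zero]

lemma proj_trace (hn : 1 ≤ n) : trace ((n:ℝ)⁻¹ • onesMat (Fin n)) = 1 := by
  have hn' : (n:ℝ) ≠ 0 := Nat.cast_ne_zero.2 (by omega)
  rw [trace_smul, trace_ones, smul_eq_mul]; field_simp

lemma qproj_trace (hn : 1 ≤ n) :
    trace ((1 : Matrix (Fin n) (Fin n) ℝ) - (n:ℝ)⁻¹ • onesMat (Fin n)) = (n:ℝ) - 1 := by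
  rw [trace_sub, trace_one, proj_trace n hn]
  simp

end proj

lemma prod3 {K P : Type*} [Fintype K] [Fintype P] [DecidableEq K] [DecidableEq P]
    (E1 E2 E0 : Matrix K K ℝ)
    (h11 : E1*E1 = E1) (h22 : E2*E2 = E2) (h00 : E0*E0 = E0)
    (h12 : E1*E2 = 0) (h21 : E2*E1 = 0) (h10 : E1*E0 = 0) (h01 : E0*E1 = 0)
    (h20 : E2*E0 = 0) (h02 : E0*E2 = 0)
    (X1 X2 X0 Y1 Y2 Y0 : Matrix P P ℝ) :
    (E1 ⊗ₖ X1 + E2 ⊗ₖ X2 + E0 ⊗ₖ X0) * (E1 ⊗ₖ Y1 + E2 ⊗ₖ Y2 + E0 ⊗ₖ Y0)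
      = E1 ⊗ₖ (X1*Y1) + E2 ⊗ₖ (X2*Y2) + E0 ⊗ₖ (X0*Y0) := by
  simp only [add_mul, mul_add, ← mul_kronecker_mul, h11, h22, h00, h12, h21, h10, h01, h20, h02,
    zero_kronecker, add_zero, zero_add]

lemma inv3 {K P : Type*} [Fintype K] [Fintype P] [DecidableEq K] [DecidableEq P]
    (E1 E2 E0 : Matrix K K ℝ)
    (hsum : E1 + E2 + E0 = 1)
    (h11 : E1*E1 = E1) (h22 : E2*E2 = E2) (h00 : E0*E0 = E0)
    (h12 : E1*E2 = 0) (h21 : E2*E1 = 0) (h10 : E1*E0 = 0) (h01 : E0*E1 = 0)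
    (h20 : E2*E0 = 0) (h02 : E0*E2 = 0)
    (X1 X2 X0 Y1 Y2 Y0 : Matrix P P ℝ)
    (g1 : X1*Y1 = 1) (g2 : X2*Y2 = 1) (g0 : X0*Y0 = 1) :
    (E1 ⊗ₖ X1 + E2 ⊗ₖ X2 + E0 ⊗ₖ X0)⁻¹ = E1 ⊗ₖ Y1 + E2 ⊗ₖ Y2 + E0 ⊗ₖ Y0 := by
  apply inv_eq_right_inv
  rw [prod3 E1 E2 E0 h11 h22 h00 h12 h21 h10 h01 h20 h02, g1, g2, g0,
    ← add_kronecker, ← add_kronecker, hsum, one_kronecker_one]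

lemma key_block {P : ℕ} (M R Vc L : Matrix (Fin P) (Fin P) ℝ)
    (hM : M.PosDef) (hR : R.PosDef) (hVc : Vc.PosDef) :
    trace (((M⁻¹ + R)⁻¹ + Vc⁻¹)⁻¹ * L)
      = trace ((M + (R + Vc)⁻¹)⁻¹ * ((R + Vc)⁻¹ * Vc * L * Vc * (R + Vc)⁻¹))
        + trace ((Vc - Vc * (R + Vc)⁻¹ * Vc) * L) := by
  set S := R + Vc with hS
  have hSpd : S.PosDef := hR.add hVc
  set A := (M⁻¹ + R)⁻¹ with hA
  have hApd : A.PosDef := (hM.inv.add hR).inv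
  set C := (M + S⁻¹)⁻¹ with hC
  have hMSpd : (M + S⁻¹).PosDef := hM.add hSpd.inv
  have hMC : (M + S⁻¹) * C = 1 := mul_nonsing_inv _ (pd_det hMSpd)
  have hMSpd' : (M⁻¹ + S).PosDef := hM.inv.add hSpd
  have hSinv : S * S⁻¹ = 1 := mul_nonsing_inv _ (pd_det hSpd)
  have hMM : M⁻¹ * M = 1 := nonsing_inv_mul _ (pd_det hM)
  have hBeq : (M⁻¹ + S)⁻¹ = S⁻¹ - S⁻¹ * C * S⁻¹ := by
    apply inv_eq_right_inv
    have key1 : (M⁻¹ * S⁻¹ + M⁻¹ * M) * (C * S⁻¹) = M⁻¹ * S⁻¹ := by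
      rw [show (M⁻¹ * S⁻¹ + M⁻¹ * M) * (C * S⁻¹) = M⁻¹ * (((S⁻¹ + M) * C) * S⁻¹) from by
        noncomm_ring, add_comm S⁻¹ M, hMC, one_mul]
    calc (M⁻¹ + S) * (S⁻¹ - S⁻¹ * C * S⁻¹)
        = (M⁻¹ * S⁻¹ + S * S⁻¹) - ((M⁻¹ * S⁻¹ + S * S⁻¹) * (C * S⁻¹)) := by noncomm_ring
      _ = (M⁻¹ * S⁻¹ + 1) - ((M⁻¹ * S⁻¹ + M⁻¹ * M) * (C * S⁻¹)) := by rw [hSinv, hMM]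
      _ = 1 := by rw [key1]; abel
  have hBinv : (M⁻¹ + S) * (M⁻¹ + S)⁻¹ = 1 := mul_nonsing_inv _ (pd_det hMSpd')
  have hAinv : A⁻¹ = M⁻¹ + R := nonsing_inv_nonsing_inv _ (pd_det (hM.inv.add hR))
  have hVcB : (Vc + A⁻¹) * (M⁻¹ + S)⁻¹ = 1 := by
    rw [hAinv, show Vc + (M⁻¹ + R) = M⁻¹ + S from by rw [hS]; abel]; exact hBinv
  have hVinv : Vc⁻¹ * Vc = 1 := nonsing_inv_mul _ (pd_det hVc)
  have hAAinv : A * A⁻¹ = 1 := mul_nonsing_inv _ (pd_det hApd)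
  set B := (M⁻¹ + S)⁻¹ with hBdef
  have hWeq : (A + Vc⁻¹)⁻¹ = Vc - Vc * B * Vc := by
    apply inv_eq_right_inv
    have key2 : (A * Vc + A * A⁻¹) * (B * Vc) = A * Vc := by
      rw [show (A * Vc + A * A⁻¹) * (B * Vc) = A * (((Vc + A⁻¹) * B) * Vc) from by
        noncomm_ring, hVcB, one_mul]
    calc (A + Vc⁻¹) * (Vc - Vc * B * Vc)
        = (A * Vc + Vc⁻¹ * Vc) - ((A * Vc + Vc⁻¹ * Vc) * (B * Vc)) := by noncomm_ring
      _ = (A * Vc + 1) - ((A * Vc + A * A⁻¹) * (B * Vc)) := by rw [hVinv, hAAinv]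
      _ = 1 := by rw [key2]; abel
  rw [hWeq, hBeq,
    show Vc - Vc * (S⁻¹ - S⁻¹ * C * S⁻¹) * Vc
        = (Vc - Vc * S⁻¹ * Vc) + Vc * S⁻¹ * C * S⁻¹ * Vc from by noncomm_ring,
    add_mul, trace_add,
    show Vc * S⁻¹ * C * S⁻¹ * Vc * L = (Vc * S⁻¹) * (C * (S⁻¹ * Vc * L)) from by noncomm_ring,
    trace_mul_comm (Vc * S⁻¹) (C * (S⁻¹ * Vc * L)),
    show (C * (S⁻¹ * Vc * L)) * (Vc * S⁻¹) = C * (S⁻¹ * Vc * L * Vc * S⁻¹) from by noncomm_ring]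
  exact add_comm _ _

theorem stmt14 (f m P : ℕ) (hf : 1 ≤ f) (hm : 1 ≤ m) (hP : 1 ≤ P)
    (hK : 2 ≤ f * m)
    (M R V : Matrix (Fin P) (Fin P) ℝ)
    (hM : M.PosDef) (hR : R.PosDef) (hV : V.PosDef)
    (b1 b : ℝ) (hb1 : 0 < b1) (hb : 0 ≤ b)
    (ℓ : Fin P → ℝ) (hℓ : ∀ i, 0 ≤ ℓ i)
    (L : Matrix (Fin P) (Fin P) ℝ) (hL : L = Matrix.diagonal ℓ)
    (N : Matrix (Fin f × Fin m) (Fin f × Fin m) ℝ)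
    (hN : N = (1 : Matrix (Fin f) (Fin f) ℝ)
        ⊗ₖ (b1 • (1 : Matrix (Fin m) (Fin m) ℝ) + b • onesMat (Fin m)))
    (V1 : Matrix (Fin P) (Fin P) ℝ) (hV1 : V1 = b1 • V)
    (V2 : Matrix (Fin P) (Fin P) ℝ) (hV2 : V2 = (m * b + b1) • V)
    (S1 : Matrix (Fin P) (Fin P) ℝ) (hS1 : S1 = R + V1)
    (S2 : Matrix (Fin P) (Fin P) ℝ) (hS2 : S2 = R + V2)
    (T : Matrix (Fin f × Fin m) (Fin f × Fin m) ℝ)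
    (hT : T = 1 - ((f : ℝ) * m)⁻¹ • onesMat (Fin f × Fin m))
    (Sig : Matrix ((Fin f × Fin m) × Fin P) ((Fin f × Fin m) × Fin P) ℝ)
    (hSig : Sig = (T ⊗ₖ (M⁻¹ + R)⁻¹ + (N ⊗ₖ V)⁻¹)⁻¹) :
    trace (Sig * ((1 : Matrix (Fin f × Fin m) (Fin f × Fin m) ℝ) ⊗ₖ L))
      = (f : ℝ) * ((m : ℝ) - 1)
          * trace ((M + S1⁻¹)⁻¹ * (S1⁻¹ * V1 * L * V1 * S1⁻¹))
        + ((f : ℝ) - 1)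
          * trace ((M + S2⁻¹)⁻¹ * (S2⁻¹ * V2 * L * V2 * S2⁻¹))
        + (f : ℝ) * ((m : ℝ) - 1) * trace ((V1 - V1 * S1⁻¹ * V1) * L)
        + ((f : ℝ) - 1) * trace ((V2 - V2 * S2⁻¹ * V2) * L)
        + trace (V2 * L) := by
  have hfne : (f : ℝ) ≠ 0 := Nat.cast_ne_zero.2 (by omega)
  have hmne : (m : ℝ) ≠ 0 := Nat.cast_ne_zero.2 (by omega)
  -- projectors
  set Pf : Matrix (Fin f) (Fin f) ℝ := (f:ℝ)⁻¹ • onesMat (Fin f) with hPf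
  set Pm : Matrix (Fin m) (Fin m) ℝ := (m:ℝ)⁻¹ • onesMat (Fin m) with hPm
  set Qf : Matrix (Fin f) (Fin f) ℝ := 1 - Pf with hQf
  set Qm : Matrix (Fin m) (Fin m) ℝ := 1 - Pm with hQm
  set E1 : Matrix (Fin f × Fin m) (Fin f × Fin m) ℝ := (1 : Matrix (Fin f) (Fin f) ℝ) ⊗ₖ Qm
    with hE1
  set E2 : Matrix (Fin f × Fin m) (Fin f × Fin m) ℝ := Qf ⊗ₖ Pm with hE2
  set E0 : Matrix (Fin f × Fin m) (Fin f × Fin m) ℝ := Pf ⊗ₖ Pm with hE0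
  -- projector multiplication facts
  have hPfPf : Pf * Pf = Pf := proj_idem f hf
  have hPmPm : Pm * Pm = Pm := proj_idem m hm
  have hQfPf : Qf * Pf = 0 := qp_mul f hf
  have hPfQf : Pf * Qf = 0 := pq_mul f hf
  have hQfQf : Qf * Qf = Qf := qq_mul f hf
  have hQmPm : Qm * Pm = 0 := qp_mul m hm
  have hPmQm : Pm * Qm = 0 := pq_mul m hm
  have hQmQm : Qm * Qm = Qm := qq_mul m hm
  have h11 : E1 * E1 = E1 := by rw [hE1, ← mul_kronecker_mul, one_mul, hQmQm]
  have h22 : E2 * E2 = E2 := by rw [hE2, ← mul_kronecker_mul, hQfQf, hPmPm]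
  have h00 : E0 * E0 = E0 := by rw [hE0, ← mul_kronecker_mul, hPfPf, hPmPm]
  have h12 : E1 * E2 = 0 := by rw [hE1, hE2, ← mul_kronecker_mul, hQmPm, kronecker_zero]
  have h21 : E2 * E1 = 0 := by rw [hE1, hE2, ← mul_kronecker_mul, hPmQm, kronecker_zero]
  have h10 : E1 * E0 = 0 := by rw [hE1, hE0, ← mul_kronecker_mul, hQmPm, kronecker_zero]
  have h01 : E0 * E1 = 0 := by rw [hE1, hE0, ← mul_kronecker_mul, hPmQm, kronecker_zero]
  have h20 : E2 * E0 = 0 := by rw [hE2, hE0, ← mul_kronecker_mul, hQfPf, zero_kronecker]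
  have h02 : E0 * E2 = 0 := by rw [hE2, hE0, ← mul_kronecker_mul, hPfQf, zero_kronecker]
  have hsum : E1 + E2 + E0 = 1 := by
    rw [hE1, hE2, hE0, add_assoc, ← add_kronecker, hQf, sub_add_cancel, ← kronecker_add, hQm,
      sub_add_cancel, one_kronecker_one]
  -- T = E1 + E2
  have hE0' : ((f : ℝ) * m)⁻¹ • onesMat (Fin f × Fin m) = E0 := by
    rw [hE0, hPf, hPm, onesMat_prod, smul_kronecker, kronecker_smul, smul_smul, mul_inv]
  have hTE : T = E1 + E2 := by
    rw [hT, hE0', ← hsum]; abel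
  -- positive definiteness
  have hc2 : 0 < (m : ℝ) * b + b1 := by positivity
  have hV1pd : V1.PosDef := hV1 ▸ posDef_smul hV hb1
  have hV2pd : V2.PosDef := hV2 ▸ posDef_smul hV hc2
  have hApd : ((M⁻¹ + R)⁻¹).PosDef := (hM.inv.add hR).inv
  have hW1pd : ((M⁻¹ + R)⁻¹ + V1⁻¹).PosDef := hApd.add hV1pd.inv
  have hW2pd : ((M⁻¹ + R)⁻¹ + V2⁻¹).PosDef := hApd.add hV2pd.inv
  -- decomposition of N
  have hblock : b1 • (1 : Matrix (Fin m) (Fin m) ℝ) + b • onesMat (Fin m)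
      = b1 • Qm + ((m : ℝ) * b + b1) • Pm := by
    rw [hQm, hPm, smul_sub, smul_smul, smul_smul]
    have : ((m : ℝ) * b + b1) * (m : ℝ)⁻¹ = b + b1 * (m : ℝ)⁻¹ := by field_simp
    rw [this, add_smul]
    abel
  have hNdec : N = b1 • E1 + ((m : ℝ) * b + b1) • E2 + ((m : ℝ) * b + b1) • E0 := by
    rw [hN, hblock, kronecker_add, kronecker_smul, kronecker_smul, ← hE1,
      show (1 : Matrix (Fin f) (Fin f) ℝ) ⊗ₖ Pm = E2 + E0 from by
        rw [hE2, hE0, ← add_kronecker, hQf, sub_add_cancel],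
      smul_add]
    abel
  have hNV : N ⊗ₖ V = E1 ⊗ₖ V1 + E2 ⊗ₖ V2 + E0 ⊗ₖ V2 := by
    rw [hNdec, add_kronecker, add_kronecker, smul_kronecker, smul_kronecker, smul_kronecker,
      ← kronecker_smul, ← kronecker_smul, ← kronecker_smul, ← hV1, ← hV2]
  have hNVinv : (N ⊗ₖ V)⁻¹ = E1 ⊗ₖ V1⁻¹ + E2 ⊗ₖ V2⁻¹ + E0 ⊗ₖ V2⁻¹ := by
    rw [hNV]
    exact inv3 E1 E2 E0 hsum h11 h22 h00 h12 h21 h10 h01 h20 h02 V1 V2 V2 V1⁻¹ V2⁻¹ V2⁻¹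
      (mul_nonsing_inv _ (pd_det hV1pd)) (mul_nonsing_inv _ (pd_det hV2pd))
      (mul_nonsing_inv _ (pd_det hV2pd))
  -- the matrix being inverted in Sig
  have hZ : T ⊗ₖ (M⁻¹ + R)⁻¹ + (N ⊗ₖ V)⁻¹
      = E1 ⊗ₖ ((M⁻¹ + R)⁻¹ + V1⁻¹) + E2 ⊗ₖ ((M⁻¹ + R)⁻¹ + V2⁻¹) + E0 ⊗ₖ V2⁻¹ := by
    rw [hTE, add_kronecker, hNVinv, kronecker_add, kronecker_add]
    abel
  have hSig2 : Sig = E1 ⊗ₖ ((M⁻¹ + R)⁻¹ + V1⁻¹)⁻¹ + E2 ⊗ₖ ((M⁻¹ + R)⁻¹ + V2⁻¹)⁻¹ + E0 ⊗ₖ V2 := by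
    rw [hSig, hZ]
    exact inv3 E1 E2 E0 hsum h11 h22 h00 h12 h21 h10 h01 h20 h02 _ _ _ _ _ _
      (mul_nonsing_inv _ (pd_det hW1pd)) (mul_nonsing_inv _ (pd_det hW2pd))
      (nonsing_inv_mul _ (pd_det hV2pd))
  -- compute the trace
  have hone : (1 : Matrix (Fin f × Fin m) (Fin f × Fin m) ℝ) ⊗ₖ L
      = E1 ⊗ₖ L + E2 ⊗ₖ L + E0 ⊗ₖ L := by
    rw [← hsum, add_kronecker, add_kronecker]
  have hprod : Sig * ((1 : Matrix (Fin f × Fin m) (Fin f × Fin m) ℝ) ⊗ₖ L)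
      = E1 ⊗ₖ (((M⁻¹ + R)⁻¹ + V1⁻¹)⁻¹ * L) + E2 ⊗ₖ (((M⁻¹ + R)⁻¹ + V2⁻¹)⁻¹ * L)
        + E0 ⊗ₖ (V2 * L) := by
    rw [hSig2, hone]
    exact prod3 E1 E2 E0 h11 h22 h00 h12 h21 h10 h01 h20 h02 _ _ _ _ _ _
  have htrE1 : trace E1 = (f : ℝ) * ((m : ℝ) - 1) := by
    rw [hE1, trace_kronecker, trace_one, hQm, hPm, qproj_trace m hm]
    simp
  have htrE2 : trace E2 = (f : ℝ) - 1 := by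
    rw [hE2, trace_kronecker, hQf, hPf, hPm, qproj_trace f hf, proj_trace m hm, mul_one]
  have htrE0 : trace E0 = 1 := by
    rw [hE0, trace_kronecker, hPf, hPm, proj_trace f hf, proj_trace m hm, mul_one]
  rw [hprod, trace_add, trace_add, trace_kronecker E1, trace_kronecker E2, trace_kronecker E0,
    htrE1, htrE2, htrE0, one_mul]
  have hk1 := key_block M R V1 L hM hR hV1pd
  have hk2 := key_block M R V2 L hM hR hV2pd
  rw [← hS1] at hk1
  rw [← hS2] at hk2
  rw [hk1, hk2]
  ring
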